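/- Conversely, let X ⊆ V(G)∖Z with |X| ≤ k be such that (G∖X,Λ) has a consistent labeling λ with λ|_Z = φ. Then X is a solution of the Multiway Cut instance (G',T,k): in G'∖X, no two distinct terminals g₁, g₂ ∈ T lie in the same connected component. -/

import Mathlib

/-- Adjacency of the Multiway Cut graph `G'` built from an untangled instance and a
fixed labeling `φ` on `Z`. -/
def mcAdj {V Γ : Type*} [Group Γ] (Arc : V → V → Prop) (Λ : V → V → Γ)
    (Z : Set V) (φ : V → Γ) : (V ⊕ Γ) → (V ⊕ Γ) → Prop
  | Sum.inl u, Sum.inl w => u ∉ Z ∧ w ∉ Z ∧ Arc u w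
  | Sum.inl v, Sum.inr g => v ∉ Z ∧ ∃ u ∈ Z, Arc u v ∧ φ u * Λ u v = g
  | Sum.inr g, Sum.inl v => v ∉ Z ∧ ∃ u ∈ Z, Arc u v ∧ φ u * Λ u v = g
  | Sum.inr _, Sum.inr _ => False

/-- Reachability from `a` to `b` in `G'` after removing the vertex set `X`. -/
def mcReach {V Γ : Type*} [Group Γ] (Arc : V → V → Prop) (Λ : V → V → Γ)
    (Z : Set V) (φ : V → Γ) (X : Finset V) (a b : V ⊕ Γ) : Prop :=
  ∃ l : List (V ⊕ Γ), l.Chain' (mcAdj Arc Λ Z φ) ∧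
    l.head? = some a ∧ l.getLast? = some b ∧ ∀ x ∈ X, Sum.inl x ∉ l

/-- Terminals of the Multiway Cut instance. -/
def mcTerminals {V Γ : Type*} [Group Γ] (Arc : V → V → Prop) (Λ : V → V → Γ)
    (Z : Set V) (φ : V → Γ) : Set Γ :=
  {g : Γ | ∃ u v, u ∈ Z ∧ v ∉ Z ∧ Arc u v ∧ φ u * Λ u v = g}

/-!
Extend `λ` to the terminals of `G'` by `g ↦ g`. Arcs of `G[V(G) ∖ Z]` carry the label `1`, and a
vertex `v` joined to the terminal `g = φ(u) · Λ(u, v)` satisfies `λ(v) = λ(u) · Λ(u, v) = g`, so this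
extension is constant along every path of `G' ∖ X`. Two distinct terminals therefore never lie on
a common path.
-/

theorem List.IsChain.apply_eq_of_head?_of_getLast? {α β : Type*} {r : α → α → Prop}
    {f : α → β} {l : List α} {a b : α} (hl : l.IsChain r)
    (hf : ∀ x ∈ l, ∀ y ∈ l, r x y → f x = f y)
    (ha : l.head? = some a) (hb : l.getLast? = some b) : f a = f b := by
  have hfl : l.IsChain (fun x y => f x = f y) := hl.imp_of_mem_imp fun x y hx hy => hf x hx y hy
  exact hfl.induction (f a = f ·) l (fun _ _ hxy hx => hx.trans hxy)
    (fun hne => by rw [(List.head_eq_iff_head?_eq_some hne).mpr ha]) b (List.mem_of_getLast? hb)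

section MultiwayCut

variable {V Γ : Type*} [Group Γ] {Arc : V → V → Prop} {Λ : V → V → Γ} {Z : Set V}
  {φ : V → Γ} {X : Finset V} {lam : V → Γ}

theorem mcAdj.sum_elim_eq
    (huntangled : ∀ u v, Arc u v → u ∉ Z → v ∉ Z → Λ u v = 1)
    (hXZ : ∀ x ∈ X, x ∉ Z) (hlamZ : ∀ z ∈ Z, lam z = φ z)
    (hcons : ∀ u v, Arc u v → u ∉ X → v ∉ X → lam v = lam u * Λ u v)
    {a b : V ⊕ Γ} (hab : mcAdj Arc Λ Z φ a b)
    (ha : ∀ x ∈ X, a ≠ .inl x) (hb : ∀ x ∈ X, b ≠ .inl x) :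
    Sum.elim lam id a = Sum.elim lam id b := by
  have hZX : ∀ z ∈ Z, z ∉ X := fun z hz hzX => hXZ z hzX hz
  match a, b, hab with
  | .inl u, .inl w, ⟨huZ, hwZ, harc⟩ =>
    have hw := hcons u w harc (fun hu => ha u hu rfl) (fun hw => hb w hw rfl)
    simp [hw, huntangled u w harc huZ hwZ]
  | .inl v, .inr _, ⟨_, u, huZ, harc, rfl⟩ =>
    have hv := hcons u v harc (hZX u huZ) (fun hv => ha v hv rfl)
    simp [hv, hlamZ u huZ]
  | .inr _, .inl v, ⟨_, u, huZ, harc, rfl⟩ =>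
    have hv := hcons u v harc (hZX u huZ) (fun hv => hb v hv rfl)
    simp [hv, hlamZ u huZ]

end MultiwayCut

theorem consistent_labeling_gives_multiway_cut_general {V Γ : Type*}
    [Group Γ]
    (Arc : V → V → Prop) (Λ : V → V → Γ)
    (Z : Set V)
    (huntangled : ∀ u v, Arc u v → u ∉ Z → v ∉ Z → Λ u v = 1)
    (φ : V → Γ)
    (X : Finset V) (hXZ : ∀ x ∈ X, x ∉ Z)
    (lam : V → Γ)
    (hlamZ : ∀ z ∈ Z, lam z = φ z)
    (hcons : ∀ u v, Arc u v → u ∉ X → v ∉ X → lam v = lam u * Λ u v) :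
    ∀ g₁ ∈ mcTerminals Arc Λ Z φ, ∀ g₂ ∈ mcTerminals Arc Λ Z φ, g₁ ≠ g₂ →
      ¬ mcReach Arc Λ Z φ X (Sum.inr g₁) (Sum.inr g₂) := by
  rintro g₁ - g₂ - hne ⟨l, hchain, hhead, hlast, hXl⟩
  have havoid : ∀ a ∈ l, ∀ x ∈ X, a ≠ .inl x := fun a ha x hx hax => hXl x hx (hax ▸ ha)
  exact hne <| hchain.apply_eq_of_head?_of_getLast? (f := Sum.elim lam id)
    (fun a ha b hb hab => hab.sum_elim_eq huntangled hXZ hlamZ hcons (havoid a ha) (havoid b hb))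
    hhead hlast

/-- Converse direction of the reduction: if `(G∖X,Λ)` has a consistent labeling
extending `φ`, then `X` separates every pair of distinct terminals in `G'`. -/
theorem consistent_labeling_gives_multiway_cut {V Γ : Type*}
    [Fintype V] [DecidableEq V] [Group Γ]
    (Arc : V → V → Prop) (Λ : V → V → Γ)
    (hsymm : ∀ u v, Arc u v → Arc v u)
    (hlab : ∀ u v, Arc u v → Λ u v = (Λ v u)⁻¹)
    (Z : Set V)
    (huntangled : ∀ u v, Arc u v → u ∉ Z → v ∉ Z → Λ u v = 1)
    (φ : V → Γ)
    (hφ : ∀ u v, u ∈ Z → v ∈ Z → Arc u v → φ v = φ u * Λ u v)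
    (k : ℕ) (X : Finset V) (hXZ : ∀ x ∈ X, x ∉ Z) (hXk : X.card ≤ k)
    (lam : V → Γ)
    (hlamZ : ∀ z ∈ Z, lam z = φ z)
    (hcons : ∀ u v, Arc u v → u ∉ X → v ∉ X → lam v = lam u * Λ u v) :
    ∀ g₁ ∈ mcTerminals Arc Λ Z φ, ∀ g₂ ∈ mcTerminals Arc Λ Z φ, g₁ ≠ g₂ →
      ¬ mcReach Arc Λ Z φ X (Sum.inr g₁) (Sum.inr g₂) :=
  consistent_labeling_gives_multiway_cut_general Arc Λ Z huntangled φ X hXZ lam hlamZ hcons
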